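/- Prefix-exchange identity and optimal substructure (used in the proof of Lemma 5.4). Let G = (V,E,T,β) be an instantaneous temporal graph with cost functions c, c_λ : E → ℕ, vertex functions ind : V → {0,1}, A : V → ℕ, and coefficients δ1,…,δ7 ∈ ℚ with δ_i ≥ 0. Let P = (e_i)_{i=1}^k be a temporal walk from s to z with time stamps t_1,…,t_k, let 1 ≤ ℓ < k, let P_ℓ = (e_i)_{i=1}^ℓ be its prefix ending at vertex v_ℓ at time t_ℓ, and let S = (e_i)_{i=ℓ+1}^k be its suffix. Then for every temporal walk Q from s to v_ℓ whose last time stamp equals t_ℓ: (i) the concatenation Q·S is a temporal walk from s to z with last time stamp t_k; and (ii) val'(Q·S) − val'(P) = val'(Q) − val'(P_ℓ). Consequently, if P minimizes val' among all temporal walks from s to z whose last time stamp is t_k, then P_ℓ minimizes val' among all temporal walks from s to v_ℓ whose last time stamp is t_ℓ. -/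

import Mathlib

namespace TW

/-- A time-arc `(v, w, t, λ)` of a temporal graph: a directed connection
from `src` to `dst` with time stamp `ts` and transmission time `tt`. -/
structure TArc (V : Type*) where
  src : V
  dst : V
  ts : ℕ
  tt : ℕ
deriving DecidableEq

/-- A time-arc `(v, w, t)` of an instantaneous temporal graph. -/
structure IArc (V : Type*) where
  src : V
  dst : V
  ts : ℕ
deriving DecidableEq

variable {V : Type*}

/-- `ValidTG Vset T E af bf` expresses that `(Vset, E, T, af, bf)` is a temporal
graph: `E ⊆ V × V × {1,…,T} × {0,…,T}` and `af, bf : V → {0,…,T}`. -/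
def ValidTG (Vset : Finset V) (T : ℕ) (E : Finset (TArc V))
    (af bf : V → ℕ) : Prop :=
  (∀ e ∈ E, e.src ∈ Vset ∧ e.dst ∈ Vset ∧ 1 ≤ e.ts ∧ e.ts ≤ T ∧ e.tt ≤ T) ∧
    ∀ v, af v ≤ T ∧ bf v ≤ T

/-- Validity for an instantaneous temporal graph `(Vset, E, T, bf)`. -/
def ValidIG (Vset : Finset V) (T : ℕ) (E : Finset (IArc V))
    (bf : V → ℕ) : Prop :=
  (∀ e ∈ E, e.src ∈ Vset ∧ e.dst ∈ Vset ∧ 1 ≤ e.ts ∧ e.ts ≤ T) ∧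
    ∀ v, bf v ≤ T

/-- A temporal walk from `s` to `z` in the temporal graph with time-arc set `E`,
minimum waiting times `af`, and maximum waiting times `bf`:
a nonempty sequence `((v_{i-1}, v_i, t_i, λ_i))_{i=1}^k` of time-arcs of `E`
with `v_0 = s`, `v_k = z`, and
`t_i + λ_i + af v_i ≤ t_{i+1} ≤ t_i + λ_i + bf v_i` for all `i ∈ {1,…,k-1}`. -/
def IsTWalk (E : Finset (TArc V)) (af bf : V → ℕ) (s z : V)
    (P : List (TArc V)) : Prop :=
  P ≠ [] ∧ (∀ e ∈ P, e ∈ E) ∧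
    P.head?.map TArc.src = some s ∧ P.getLast?.map TArc.dst = some z ∧
    List.Chain' (fun e f => e.dst = f.src ∧
      e.ts + e.tt + af e.dst ≤ f.ts ∧ f.ts ≤ e.ts + e.tt + bf e.dst) P

/-- A temporal walk from `s` to `z` in an instantaneous temporal graph. -/
def IsIWalk (E : Finset (IArc V)) (bf : V → ℕ) (s z : V)
    (P : List (IArc V)) : Prop :=
  P ≠ [] ∧ (∀ e ∈ P, e ∈ E) ∧
    P.head?.map IArc.src = some s ∧ P.getLast?.map IArc.dst = some z ∧
    List.Chain' (fun e f => e.dst = f.src ∧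
      e.ts ≤ f.ts ∧ f.ts ≤ e.ts + bf e.dst) P

/-- The vertex sequence `v_0, v_1, …, v_k` of a walk. -/
def tVerts (P : List (TArc V)) : List V :=
  (P.head?.map TArc.src).toList ++ P.map TArc.dst

/-- The vertex sequence `v_0, v_1, …, v_k` of a walk (instantaneous case). -/
def iVerts (P : List (IArc V)) : List V :=
  (P.head?.map IArc.src).toList ++ P.map IArc.dst

/-- Departure time `t_1` of a walk. -/
def tFirst (P : List (TArc V)) : ℕ := (P.head?.map TArc.ts).getD 0

/-- Arrival time `t_k + λ_k` of a walk. -/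
def tLastArr (P : List (TArc V)) : ℕ :=
  (P.getLast?.map (fun e => e.ts + e.tt)).getD 0

/-- First time stamp `t_1` of an instantaneous walk. -/
def iFirst (P : List (IArc V)) : ℕ := (P.head?.map IArc.ts).getD 0

/-- Last time stamp `t_m` of an instantaneous walk. -/
def iLast (P : List (IArc V)) : ℕ := (P.getLast?.map IArc.ts).getD 0

/-- Total waiting time `∑_{i=1}^{k-1} (t_{i+1} - (t_i + λ_i))` of a walk. -/
def waitSum (P : List (TArc V)) : ℚ :=
  ((P.zip P.tail).map
    (fun ef => (ef.2.ts : ℚ) - ((ef.1.ts : ℚ) + (ef.1.tt : ℚ)))).sum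

/-- `val(P)`: the linear combination
`δ1·(t_k+λ_k) + δ2·(−t_1) + δ3·(t_k+λ_k−t_1) + δ4·Σλ_i + δ5·Σc(e_i) + δ6·k
 + δ7·Σ(t_{i+1}−(t_i+λ_i))`. -/
def val (c : TArc V → ℕ) (d1 d2 d3 d4 d5 d6 d7 : ℚ) (P : List (TArc V)) : ℚ :=
  d1 * (tLastArr P : ℚ) + d2 * (-(tFirst P : ℚ))
    + d3 * ((tLastArr P : ℚ) - (tFirst P : ℚ))
    + d4 * (P.map (fun e => (e.tt : ℚ))).sum
    + d5 * (P.map (fun e => (c e : ℚ))).sum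
    + d6 * (P.length : ℚ) + d7 * waitSum P

/-- `∑_{i=1}^{m-1} ((t_{i+1} − (t_i − A(v_i)))·ind(v_i))` for an instantaneous
walk, where `v_i` is the intermediate vertex between `e_i` and `e_{i+1}`. -/
def iWaitSum (ind A : V → ℕ) (P : List (IArc V)) : ℚ :=
  ((P.zip P.tail).map
    (fun ef => ((ef.2.ts : ℚ) - ((ef.1.ts : ℚ) - (A ef.1.dst : ℚ)))
      * (ind ef.1.dst : ℚ))).sum

/-- `val'(P)`: the adapted linear combination
`δ1·t_m + δ2·(−t_1) + δ3·(t_m−t_1) + δ4·Σc_λ(e_i) + δ5·Σc(e_i) + (δ6/2)·m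
 + δ7·Σ((t_{i+1}−(t_i−A(v_i)))·ind(v_i))` for instantaneous walks. -/
def val' (c cl : IArc V → ℕ) (ind A : V → ℕ) (d1 d2 d3 d4 d5 d6 d7 : ℚ)
    (P : List (IArc V)) : ℚ :=
  d1 * (iLast P : ℚ) + d2 * (-(iFirst P : ℚ))
    + d3 * ((iLast P : ℚ) - (iFirst P : ℚ))
    + d4 * (P.map (fun e => (cl e : ℚ))).sum
    + d5 * (P.map (fun e => (c e : ℚ))).sum
    + (d6 / 2) * (P.length : ℚ) + d7 * iWaitSum ind A P

section Transformation

variable [DecidableEq V]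

/-- The arcs `E^O = {(v, v_e, t) : e = (v,u,t,λ) ∈ E}` of Transformation 1. -/
def trEO (E : Finset (TArc V)) : Finset (IArc (V ⊕ TArc V)) :=
  E.image (fun e => ⟨Sum.inl e.src, Sum.inr e, e.ts⟩)

/-- The arcs `E^I = {(v_e, u, t+λ+α(u)) : e = (v,u,t,λ) ∈ E}`. -/
def trEI (af : V → ℕ) (E : Finset (TArc V)) : Finset (IArc (V ⊕ TArc V)) :=
  E.image (fun e => ⟨Sum.inr e, Sum.inl e.dst, e.ts + e.tt + af e.dst⟩)

/-- The arc set `E' = E^O ∪ E^I` of the transformed instantaneous graph. -/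
def trE (af : V → ℕ) (E : Finset (TArc V)) : Finset (IArc (V ⊕ TArc V)) :=
  trEO E ∪ trEI af E

/-- `β'`: `β' v = β v` for `v ∈ V` and `β' v_e = T` for arc vertices. -/
def trBeta (bf : V → ℕ) (T : ℕ) : V ⊕ TArc V → ℕ :=
  Sum.elim bf (fun _ => T)

/-- The transformed cost function `c'`. -/
def trC (c : TArc V → ℕ) : IArc (V ⊕ TArc V) → ℕ := fun e' =>
  match e'.src, e'.dst with
  | Sum.inl _, Sum.inr eh => c eh
  | _, _ => 0

/-- The transmission-cost function `c_λ`. -/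
def trCl : IArc (V ⊕ TArc V) → ℕ := fun e' =>
  match e'.src, e'.dst with
  | Sum.inr eh, Sum.inl _ => eh.tt
  | _, _ => 0

/-- The vertex-index function `ind`: `1` on original vertices, `0` else. -/
def trInd : V ⊕ TArc V → ℕ := Sum.elim (fun _ => 1) (fun _ => 0)

/-- The auxiliary function `A`: `A v = α v` on original vertices, `0` else. -/
def trA (af : V → ℕ) : V ⊕ TArc V → ℕ := Sum.elim af (fun _ => 0)

/-- The walk `P'` in `G'` corresponding to a walk `P` in `G`:
each arc `e = (v,u,t,λ)` is replaced by the two arcs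
`(v, v_e, t)` and `(v_e, u, t+λ+α(u))`. -/
def corr (af : V → ℕ) (P : List (TArc V)) : List (IArc (V ⊕ TArc V)) :=
  P.flatMap (fun e =>
    [⟨Sum.inl e.src, Sum.inr e, e.ts⟩,
     ⟨Sum.inr e, Sum.inl e.dst, e.ts + e.tt + af e.dst⟩])

end Transformation

/-!
Both the walk condition at the junction of `Q ++ S` and the contribution of that junction
to `val'` see the prefix `Q` only through the target vertex and time stamp of its last arc.
Exchanging `P_ℓ` for a walk `Q` with the same last vertex and last time stamp therefore
keeps the suffix `S` attached validly and changes `val'` by exactly `val' Q - val' P_ℓ`;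
minimality of `P` then transfers to `P_ℓ`.
-/

theorem _root_.List.zip_tail_append {α : Type*} {l s : List α} (hl : l ≠ []) (hs : s ≠ []) :
    (l ++ s).zip (l ++ s).tail = l.zip l.tail ++ (l.getLast hl, s.head hs) :: s.zip s.tail := by
  induction l with
  | nil => exact absurd rfl hl
  | cons a l ih =>
    cases l with
    | nil =>
      obtain ⟨b, t, rfl⟩ := List.exists_cons_of_ne_nil hs
      simp
    | cons b l =>
      simp only [List.cons_append, List.tail_cons, List.zip_cons_cons] at ih ⊢
      rw [ih (List.cons_ne_nil b l), List.getLast_cons (List.cons_ne_nil b l)]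

section

variable {E : Finset (IArc V)} {bf : V → ℕ}
variable (c cl : IArc V → ℕ) (ind A : V → ℕ) (d1 d2 d3 d4 d5 d6 d7 : ℚ)

theorem iLast_append {Q S : List (IArc V)} (hS : S ≠ []) : iLast (Q ++ S) = iLast S := by
  rw [iLast, iLast, List.getLast?_append_of_ne_nil _ hS]

theorem iLast_eq_getLast_ts {Q : List (IArc V)} (hQ : Q ≠ []) :
    iLast Q = (Q.getLast hQ).ts := by
  rw [iLast, List.getLast?_eq_some_getLast hQ]
  rfl

theorem IsIWalk.getLast_dst {s v : V} {Q : List (IArc V)} (hQ : IsIWalk E bf s v Q) :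
    (Q.getLast hQ.1).dst = v := by
  simpa [List.getLast?_eq_some_getLast hQ.1] using hQ.2.2.2.1

theorem IsIWalk.append_of_getLast_eq {s s' v z : V} {P Q S : List (IArc V)}
    (hPS : IsIWalk E bf s z (P ++ S)) (hQ : IsIWalk E bf s' v Q) (hP : P ≠ []) (hS : S ≠ [])
    (hdst : (Q.getLast hQ.1).dst = (P.getLast hP).dst)
    (hts : (Q.getLast hQ.1).ts = (P.getLast hP).ts) :
    IsIWalk E bf s' z (Q ++ S) := by
  obtain ⟨-, hPSE, -, hPSlast, hPSchain⟩ := hPS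
  obtain ⟨-, hSchain, hseam⟩ := List.isChain_append.mp hPSchain
  refine ⟨by simp [hQ.1], ?_, by rw [List.head?_append_of_ne_nil _ hQ.1]; exact hQ.2.2.1, ?_, ?_⟩
  · intro e he
    rcases List.mem_append.mp he with h | h
    exacts [hQ.2.1 e h, hPSE e (List.mem_append_right P h)]
  · rwa [List.getLast?_append_of_ne_nil _ hS] at hPSlast ⊢
  · refine hQ.2.2.2.2.append hSchain fun x hx y hy => ?_
    rw [List.getLast?_eq_some_getLast hQ.1, Option.mem_some_iff] at hx
    subst hx
    rw [hdst, hts]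
    exact hseam _ (by simp [List.getLast?_eq_some_getLast hP]) y hy

theorem iWaitSum_append {Q S : List (IArc V)} (hQ : Q ≠ []) (hS : S ≠ []) :
    iWaitSum ind A (Q ++ S) = iWaitSum ind A Q
      + (((S.head hS).ts : ℚ) - (((Q.getLast hQ).ts : ℚ)
          - (A (Q.getLast hQ).dst : ℚ))) * (ind (Q.getLast hQ).dst : ℚ)
      + iWaitSum ind A S := by
  simp only [iWaitSum, List.zip_tail_append hQ hS, List.map_append, List.map_cons,
    List.sum_append, List.sum_cons]
  ring

theorem val'_append {Q S : List (IArc V)} (hQ : Q ≠ []) (hS : S ≠ []) :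
    val' c cl ind A d1 d2 d3 d4 d5 d6 d7 (Q ++ S)
      = val' c cl ind A d1 d2 d3 d4 d5 d6 d7 Q
        + (d1 + d3) * ((iLast S : ℚ) - ((Q.getLast hQ).ts : ℚ))
        + d4 * (S.map (fun e => (cl e : ℚ))).sum
        + d5 * (S.map (fun e => (c e : ℚ))).sum
        + (d6 / 2) * (S.length : ℚ)
        + d7 * (iWaitSum ind A S
            + (((S.head hS).ts : ℚ) - (((Q.getLast hQ).ts : ℚ)
                - (A (Q.getLast hQ).dst : ℚ))) * (ind (Q.getLast hQ).dst : ℚ)) := by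
  have hfirst : iFirst (Q ++ S) = iFirst Q := by
    rw [iFirst, iFirst, List.head?_append_of_ne_nil _ hQ]
  rw [val', val', hfirst, iLast_append hS, iLast_eq_getLast_ts hQ, iWaitSum_append ind A hQ hS]
  simp only [List.map_append, List.sum_append, List.length_append, Nat.cast_add]
  ring

theorem val'_append_sub_val'_append {Q Q' S : List (IArc V)}
    (hQ : Q ≠ []) (hQ' : Q' ≠ []) (hS : S ≠ [])
    (hdst : (Q.getLast hQ).dst = (Q'.getLast hQ').dst)
    (hts : (Q.getLast hQ).ts = (Q'.getLast hQ').ts) :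
    val' c cl ind A d1 d2 d3 d4 d5 d6 d7 (Q ++ S) - val' c cl ind A d1 d2 d3 d4 d5 d6 d7 (Q' ++ S)
      = val' c cl ind A d1 d2 d3 d4 d5 d6 d7 Q - val' c cl ind A d1 d2 d3 d4 d5 d6 d7 Q' := by
  rw [val'_append c cl ind A d1 d2 d3 d4 d5 d6 d7 hQ hS,
    val'_append c cl ind A d1 d2 d3 d4 d5 d6 d7 hQ' hS, hdst, hts]
  ring

theorem IsIWalk.exchange_prefix {s s' z : V}
    {P Q S : List (IArc V)} (hPS : IsIWalk E bf s z (P ++ S)) (hP : P ≠ []) (hS : S ≠ [])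
    (hQ : IsIWalk E bf s' (P.getLast hP).dst Q) (hQl : iLast Q = (P.getLast hP).ts) :
    IsIWalk E bf s' z (Q ++ S) ∧ iLast (Q ++ S) = iLast (P ++ S) ∧
      val' c cl ind A d1 d2 d3 d4 d5 d6 d7 (Q ++ S) - val' c cl ind A d1 d2 d3 d4 d5 d6 d7 (P ++ S)
        = val' c cl ind A d1 d2 d3 d4 d5 d6 d7 Q - val' c cl ind A d1 d2 d3 d4 d5 d6 d7 P := by
  have hdst := hQ.getLast_dst
  have hts : (Q.getLast hQ.1).ts = (P.getLast hP).ts := by rw [← iLast_eq_getLast_ts, hQl]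
  exact ⟨hPS.append_of_getLast_eq hQ hP hS hdst hts, by rw [iLast_append hS, iLast_append hS],
    val'_append_sub_val'_append c cl ind A d1 d2 d3 d4 d5 d6 d7 hQ.1 hP hS hdst hts⟩

end

/-- **Prefix-exchange identity and optimal substructure (Lemma 5.4).**
Let `P` be a temporal walk from `s` to `z`, `1 ≤ ℓ < k`, with prefix
`P_ℓ = P.take ℓ` ending at vertex `v_ℓ` at time `t_ℓ` and suffix `S = P.drop ℓ`.
For every temporal walk `Q` from `s` to `v_ℓ` whose last time stamp is `t_ℓ`:
(i) `Q ++ S` is a temporal walk from `s` to `z` with last time stamp `t_k`, and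
(ii) `val'(Q ++ S) − val'(P) = val'(Q) − val'(P_ℓ)`. Consequently, if `P`
minimizes `val'` among walks from `s` to `z` with last time stamp `t_k`, then
`P_ℓ` minimizes `val'` among walks from `s` to `v_ℓ` with last time stamp `t_ℓ`. -/
theorem prefix_exchange_optimal_substructure
    {V : Type*} (E : Finset (IArc V)) (bf : V → ℕ)
    (c cl : IArc V → ℕ) (ind A : V → ℕ)
    (d1 d2 d3 d4 d5 d6 d7 : ℚ)
    (s z : V) (P : List (IArc V)) (hP : IsIWalk E bf s z P)
    (l : ℕ) (hl1 : 1 ≤ l) (hl : l < P.length) :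
    (∀ Q, IsIWalk E bf s ((P.get ⟨l - 1, by omega⟩).dst) Q →
      iLast Q = (P.get ⟨l - 1, by omega⟩).ts →
        (IsIWalk E bf s z (Q ++ P.drop l) ∧
          iLast (Q ++ P.drop l) = iLast P ∧
          val' c cl ind A d1 d2 d3 d4 d5 d6 d7 (Q ++ P.drop l)
              - val' c cl ind A d1 d2 d3 d4 d5 d6 d7 P =
            val' c cl ind A d1 d2 d3 d4 d5 d6 d7 Q
              - val' c cl ind A d1 d2 d3 d4 d5 d6 d7 (P.take l))) ∧
    ((∀ R, IsIWalk E bf s z R → iLast R = iLast P →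
        val' c cl ind A d1 d2 d3 d4 d5 d6 d7 P ≤
          val' c cl ind A d1 d2 d3 d4 d5 d6 d7 R) →
      ∀ R, IsIWalk E bf s ((P.get ⟨l - 1, by omega⟩).dst) R →
        iLast R = (P.get ⟨l - 1, by omega⟩).ts →
          val' c cl ind A d1 d2 d3 d4 d5 d6 d7 (P.take l) ≤
            val' c cl ind A d1 d2 d3 d4 d5 d6 d7 R) := by
  have hP₁ : P.take l ≠ [] := List.ne_nil_of_length_pos (by rw [List.length_take]; omega)
  have hS : P.drop l ≠ [] := List.ne_nil_of_length_pos (by rw [List.length_drop]; omega)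
  have hlast : (P.take l).getLast hP₁ = P.get ⟨l - 1, by omega⟩ := by
    simp [List.getLast_take, List.getElem?_eq_getElem (by omega : l - 1 < P.length)]
  have hPS : IsIWalk E bf s z (P.take l ++ P.drop l) := by rwa [List.take_append_drop]
  refine ⟨fun Q hQ hQl => ?_, fun hopt R hR hRl => ?_⟩
  · rw [← hlast] at hQ hQl
    simpa only [List.take_append_drop] using
      hPS.exchange_prefix c cl ind A d1 d2 d3 d4 d5 d6 d7 hP₁ hS hQ hQl
  · rw [← hlast] at hR hRl
    obtain ⟨hwalk, hRlast, hval⟩ :=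
      hPS.exchange_prefix c cl ind A d1 d2 d3 d4 d5 d6 d7 hP₁ hS hR hRl
    rw [List.take_append_drop] at hRlast hval
    linarith [hopt _ hwalk hRlast]

end TW
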